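/- Let A be an associative algebra over a field k. The second Hochschild cohomology group HH²(A, A) is in bijection with equivalence classes of infinitesimal (first-order) deformations of A, i.e. associative k[ε]/(ε²)-algebra structures on A ⊗ k[ε]/(ε²) reducing to A modulo ε, up to isomorphisms reducing to the identity modulo ε. -/
import Mathlib


variable {k : Type*} [Field k] {A : Type*} [Ring A] [Algebra k A]

/-- The Hochschild 2-cocycle condition for a `k`-bilinear map `φ : A ⊗ A → A`. -/
def IsHochschild2Cocycle (φ : A →ₗ[k] A →ₗ[k] A) : Prop :=
  ∀ a b c : A, a * φ b c - φ (a * b) c + φ a (b * c) - φ a b * c = 0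

/-- The Hochschild 2-coboundary condition: `φ = δg` for some `k`-linear `g : A → A`. -/
def IsHochschild2Coboundary (φ : A →ₗ[k] A →ₗ[k] A) : Prop :=
  ∃ g : A →ₗ[k] A, ∀ a b : A, φ a b = a * g b - g (a * b) + g a * b

/-- The product on `A ⊕ εA = A ⊗ k[ε]/(ε²)` deformed by `φ`:
`(a + εb)(a' + εb') = aa' + ε(ab' + ba' + φ(a,a'))`. -/
def defProd (φ : A →ₗ[k] A →ₗ[k] A) (x y : A × A) : A × A :=
  (x.1 * y.1, x.1 * y.2 + x.2 * y.1 + φ x.1 y.1)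

/-- `φ` defines a first-order deformation iff the deformed product is associative. -/
def IsFirstOrderDeformation (φ : A →ₗ[k] A →ₗ[k] A) : Prop :=
  ∀ x y z : A × A, defProd φ (defProd φ x y) z = defProd φ x (defProd φ y z)

/-- Two first-order deformations are equivalent if they are intertwined by an
isomorphism `a + εb ↦ a + ε(b + g(a))` reducing to the identity modulo `ε`. -/
def DefEquiv (φ φ' : A →ₗ[k] A →ₗ[k] A) : Prop :=
  ∃ g : A →ₗ[k] A, ∀ x y : A × A,
    (fun z : A × A => (z.1, z.2 + g z.1)) (defProd φ x y) =
      defProd φ' ((fun z : A × A => (z.1, z.2 + g z.1)) x)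
        ((fun z : A × A => (z.1, z.2 + g z.1)) y)

lemma part1_aux (φ : A →ₗ[k] A →ₗ[k] A) :
    IsFirstOrderDeformation (k := k) φ ↔ IsHochschild2Cocycle (k := k) φ := by
  constructor
  · intro h a b c
    have h2 := congrArg Prod.snd (h (a, 0) (b, 0) (c, 0))
    simp only [defProd, mul_zero, zero_mul, add_zero, zero_add] at h2
    linear_combination (norm := abel1) -h2
  · intro hφ x y z
    have h1 : φ (x.1 * y.1) z.1 + φ x.1 y.1 * z.1
        = x.1 * φ y.1 z.1 + φ x.1 (y.1 * z.1) := by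
      linear_combination (norm := abel1) -hφ x.1 y.1 z.1
    simp only [defProd, Prod.mk.injEq, add_mul, mul_add, mul_assoc]
    exact ⟨trivial, by linear_combination (norm := abel1) h1⟩

lemma part2_aux (φ φ' : A →ₗ[k] A →ₗ[k] A) :
    DefEquiv (k := k) φ φ' ↔ IsHochschild2Coboundary (k := k) (φ' - φ) := by
  constructor
  · rintro ⟨g, hg⟩
    refine ⟨-g, fun a b => ?_⟩
    have h2 := congrArg Prod.snd (hg (a, 0) (b, 0))
    simp only [defProd, mul_zero, zero_mul, add_zero, zero_add] at h2
    simp only [LinearMap.sub_apply, LinearMap.neg_apply, mul_neg, neg_mul]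
    linear_combination (norm := abel1) -h2
  · rintro ⟨g, hg⟩
    refine ⟨-g, fun x y => ?_⟩
    have h2 := hg x.1 y.1
    simp only [LinearMap.sub_apply] at h2
    simp only [defProd, Prod.mk.injEq, LinearMap.neg_apply, mul_add, add_mul,
      mul_neg, neg_mul]
    exact ⟨trivial, by linear_combination (norm := abel1) -h2⟩

lemma cob_swap_aux (φ ψ : A →ₗ[k] A →ₗ[k] A) :
    IsHochschild2Coboundary (k := k) (φ - ψ) →
      IsHochschild2Coboundary (k := k) (ψ - φ) := by
  rintro ⟨g, hg⟩
  refine ⟨-g, fun a b => ?_⟩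
  have := hg a b
  simp only [LinearMap.sub_apply] at this ⊢
  simp only [LinearMap.neg_apply, mul_neg, neg_mul]
  linear_combination (norm := abel1) -this

lemma part3_aux :
    Nonempty
      ((Quot fun φ ψ : {φ : A →ₗ[k] A →ₗ[k] A // IsHochschild2Cocycle (k := k) φ} =>
          IsHochschild2Coboundary (k := k) (φ.1 - ψ.1)) ≃
       (Quot fun φ ψ : {φ : A →ₗ[k] A →ₗ[k] A // IsFirstOrderDeformation (k := k) φ} =>
          DefEquiv (k := k) φ.1 ψ.1)) := by
  refine ⟨{
    toFun := Quot.map (fun φ => ⟨φ.1, (part1_aux φ.1).mpr φ.2⟩)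
      (fun φ ψ h => (part2_aux φ.1 ψ.1).mpr (cob_swap_aux _ _ h))
    invFun := Quot.map (fun φ => ⟨φ.1, (part1_aux φ.1).mp φ.2⟩)
      (fun φ ψ h => cob_swap_aux _ _ ((part2_aux φ.1 ψ.1).mp h))
    left_inv := fun q => Quot.inductionOn q (fun x => rfl)
    right_inv := fun q => Quot.inductionOn q (fun x => rfl) }⟩

/-- `HH²(A,A)` classifies first-order deformations of `A`: a deformed product is
associative iff the deforming cochain is a Hochschild 2-cocycle, two deformations are
equivalent iff the cocycles differ by a coboundary, and consequently `HH²(A,A)` is in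
bijection with equivalence classes of first-order deformations. -/
theorem hochschild2_classifies_first_order_deformations :
    (∀ φ : A →ₗ[k] A →ₗ[k] A,
      IsFirstOrderDeformation (k := k) φ ↔ IsHochschild2Cocycle (k := k) φ) ∧
    (∀ φ φ' : A →ₗ[k] A →ₗ[k] A, IsFirstOrderDeformation (k := k) φ →
      IsFirstOrderDeformation (k := k) φ' →
      (DefEquiv (k := k) φ φ' ↔ IsHochschild2Coboundary (k := k) (φ' - φ))) ∧
    Nonempty
      ((Quot fun φ ψ : {φ : A →ₗ[k] A →ₗ[k] A // IsHochschild2Cocycle (k := k) φ} =>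
          IsHochschild2Coboundary (k := k) (φ.1 - ψ.1)) ≃
       (Quot fun φ ψ : {φ : A →ₗ[k] A →ₗ[k] A // IsFirstOrderDeformation (k := k) φ} =>
          DefEquiv (k := k) φ.1 ψ.1)) := by
  exact ⟨part1_aux, fun φ φ' _ _ => part2_aux φ φ', part3_aux⟩
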